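/- Let k ≥ 1, let n ≥ 2, let ζ ∈ ℂ be a primitive (2n)-th root of unity, and let ℓ be an integer with 1 ≤ ℓ ≤ n − 1 such that there exists b with 0 ≤ b ≤ k and (k : ℤ) − 2b ≡ ℓ (mod 2n). Let A = {X : Matrix I_k I_k ℂ | X·D(k,ζ) = D(k,ζ)·X and X·P_k = P_k·X} (the centralizer algebra Z_k(D_n)) and let W = {v : I_k → ℂ | D(k,ζ).mulVec v = ζ^ℓ • v} (a nonzero subspace). Then: (i) W is invariant under A, i.e. X.mulVec v ∈ W for every X ∈ A and v ∈ W; and (ii) W is an irreducible A-module: every ℂ-subspace U ⊆ W satisfying X.mulVec u ∈ U for all X ∈ A and u ∈ U is either 0 or all of W. -/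
import Mathlib


open Matrix

/-- The number of `-1` factors (encoded as `true`) in a simple tensor index. -/
def wt {k : ℕ} (r : Fin k → Bool) : ℕ := (Finset.univ.filter fun i => r i = true).card

/-- The sign-reversal `-r` of an index, `(−r) i = ¬ (r i)`. -/
def negt {k : ℕ} (r : Fin k → Bool) : Fin k → Bool := fun i => !(r i)

/-- The matrix of `g^{⊗k}` on `V^{⊗k}` for `g = diag(ζ⁻¹, ζ)`. -/
noncomputable def Dmat (k : ℕ) (ζ : ℂ) : Matrix (Fin k → Bool) (Fin k → Bool) ℂ :=
  Matrix.diagonal fun r => ζ ^ ((k : ℤ) - 2 * (wt r : ℤ))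

/-- The 0–1 matrix with `P r s = 1` iff `s = −r`. -/
noncomputable def Pmat (k : ℕ) : Matrix (Fin k → Bool) (Fin k → Bool) ℂ :=
  Matrix.of fun r s => if s = negt r then 1 else 0

/-- The eigenspace `{v | M.mulVec v = μ • v}` as a submodule of `I → ℂ`. -/
noncomputable def eigSub {I : Type*} [Fintype I] (M : Matrix I I ℂ) (μ : ℂ) :
    Submodule ℂ (I → ℂ) where
  carrier := {v | M.mulVec v = μ • v}
  add_mem' := by
    intro a b ha hb
    simp only [Set.mem_setOf_eq] at *
    rw [Matrix.mulVec_add, ha, hb, smul_add]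
  zero_mem' := by
    simp only [Set.mem_setOf_eq, Matrix.mulVec_zero, smul_zero]
  smul_mem' := by
    intro c v hv
    simp only [Set.mem_setOf_eq] at *
    rw [Matrix.mulVec_smul, hv, smul_comm]

lemma mem_eigSub {I : Type*} [Fintype I] {M : Matrix I I ℂ} {μ : ℂ} {v : I → ℂ} :
    v ∈ eigSub M μ ↔ M.mulVec v = μ • v := Iff.rfl

lemma wt_le {k : ℕ} (r : Fin k → Bool) : wt r ≤ k := by
  classical
  exact (Finset.card_filter_le _ _).trans (by simp)

lemma negt_negt {k : ℕ} (r : Fin k → Bool) : negt (negt r) = r := by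
  funext i; simp [negt]

lemma negt_eq_iff {k : ℕ} (a b : Fin k → Bool) : negt a = b ↔ a = negt b := by
  constructor <;> rintro rfl <;> simp [negt_negt]

lemma wt_negt {k : ℕ} (r : Fin k → Bool) : wt (negt r) = k - wt r := by
  classical
  have h : (Finset.univ.filter fun i => negt r i = true) =
      Finset.univ \ (Finset.univ.filter fun i => r i = true) := by
    ext i; simp [negt]
  rw [wt, h, Finset.card_sdiff_of_subset (Finset.filter_subset _ _)]
  simp [wt]

lemma mul_Pmat_apply {k : ℕ} (X : Matrix (Fin k → Bool) (Fin k → Bool) ℂ)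
    (r s : Fin k → Bool) : (X * Pmat k) r s = X r (negt s) := by
  classical
  rw [Matrix.mul_apply]
  simp only [Pmat, of_apply]
  rw [Finset.sum_eq_single (negt s)]
  · simp [negt_negt]
  · intro t _ ht
    have : s ≠ negt t := fun h => ht (by rw [h, negt_negt])
    simp [this]
  · simp

lemma Pmat_mul_apply {k : ℕ} (X : Matrix (Fin k → Bool) (Fin k → Bool) ℂ)
    (r s : Fin k → Bool) : (Pmat k * X) r s = X (negt r) s := by
  classical
  rw [Matrix.mul_apply]
  simp only [Pmat, of_apply]
  rw [Finset.sum_eq_single (negt r)]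
  · simp
  · intro t _ ht
    simp [ht]
  · simp

/-- For `1 ≤ ℓ ≤ n − 1` with `ℓ ≡ k − 2b (mod 2n)` for some `0 ≤ b ≤ k`, the eigenspace
`W = {v | D v = ζ^ℓ v}` is invariant under the centralizer algebra `Z_k(D_n)` of
`{D(k,ζ), P_k}`, and it is an irreducible `Z_k(D_n)`-module. -/
theorem stmt10 (k n : ℕ) (hk : 1 ≤ k) (hn : 2 ≤ n) (ζ : ℂ)
    (hζ : IsPrimitiveRoot ζ (2 * n)) (ℓ : ℕ) (hℓ1 : 1 ≤ ℓ) (hℓ2 : ℓ ≤ n - 1)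
    (hex : ∃ b : ℕ, b ≤ k ∧
      ((k : ℤ) - 2 * (b : ℤ)) ≡ (ℓ : ℤ) [ZMOD ((2 * n : ℕ) : ℤ)]) :
    (∀ X : Matrix (Fin k → Bool) (Fin k → Bool) ℂ,
        X * Dmat k ζ = Dmat k ζ * X → X * Pmat k = Pmat k * X →
        ∀ v ∈ eigSub (Dmat k ζ) (ζ ^ ℓ), X.mulVec v ∈ eigSub (Dmat k ζ) (ζ ^ ℓ)) ∧
    (∀ U : Submodule ℂ ((Fin k → Bool) → ℂ), U ≤ eigSub (Dmat k ζ) (ζ ^ ℓ) →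
        (∀ X : Matrix (Fin k → Bool) (Fin k → Bool) ℂ,
          X * Dmat k ζ = Dmat k ζ * X → X * Pmat k = Pmat k * X →
          ∀ u ∈ U, X.mulVec u ∈ U) →
        U = ⊥ ∨ U = eigSub (Dmat k ζ) (ζ ^ ℓ)) := by
  classical
  set e : (Fin k → Bool) → ℂ := fun r => ζ ^ ((k : ℤ) - 2 * (wt r : ℤ)) with he
  -- basic facts
  have hζ0 : ζ ≠ 0 := hζ.ne_zero (by omega)
  have h2l : ζ ^ (2 * ℓ) ≠ 1 := by
    intro h1
    have hdvd : 2 * n ∣ 2 * ℓ := (hζ.pow_eq_one_iff_dvd _).mp h1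
    have : n ∣ ℓ := (mul_dvd_mul_iff_left (a := 2) two_ne_zero).mp hdvd
    have := Nat.le_of_dvd (by omega) this
    omega
  have hneq : (ζ ^ ℓ)⁻¹ ≠ ζ ^ ℓ := by
    intro h
    apply h2l
    rw [two_mul, pow_add]
    nth_rewrite 1 [← h]
    rw [inv_mul_cancel₀ (pow_ne_zero _ hζ0)]
  have hEneg : ∀ s : Fin k → Bool, e s = ζ ^ ℓ → e (negt s) = (ζ ^ ℓ)⁻¹ := by
    intro s hs
    have hexp : (k : ℤ) - 2 * (wt (negt s) : ℤ) = -((k : ℤ) - 2 * (wt s : ℤ)) := by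
      rw [wt_negt]
      have := wt_le s
      push_cast [Nat.cast_sub this]
      ring
    show ζ ^ ((k : ℤ) - 2 * (wt (negt s) : ℤ)) = (ζ ^ ℓ)⁻¹
    rw [hexp, _root_.zpow_neg,
      show (ζ : ℂ) ^ ((k : ℤ) - 2 * (wt s : ℤ)) = e s from rfl, hs]
  -- pointwise characterization of membership in W
  have hmemW : ∀ v : (Fin k → Bool) → ℂ,
      v ∈ eigSub (Dmat k ζ) (ζ ^ ℓ) ↔ ∀ r, e r * v r = ζ ^ ℓ * v r := by
    intro v
    rw [mem_eigSub, funext_iff]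
    apply forall_congr'
    intro r
    rw [Dmat, Matrix.mulVec_diagonal]
    rfl
  constructor
  · -- invariance
    intro X hXD _ v hv
    rw [mem_eigSub] at hv ⊢
    rw [Matrix.mulVec_mulVec, ← hXD, ← Matrix.mulVec_mulVec, hv, Matrix.mulVec_smul]
  · -- irreducibility
    intro U hUW hUinv
    by_cases hU : U = ⊥
    · exact Or.inl hU
    right
    -- get a nonzero vector in U
    obtain ⟨u, huU, hune⟩ := Submodule.exists_mem_ne_zero_of_ne_bot hU
    obtain ⟨s0, hs0ne⟩ : ∃ s0, u s0 ≠ 0 := by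
      by_contra h
      push_neg at h
      exact hune (funext h)
    have huW := hUW huU
    rw [hmemW] at huW
    have hs0 : e s0 = ζ ^ ℓ := mul_right_cancel₀ hs0ne (huW s0)
    have hus0neg : u (negt s0) = 0 := by
      by_contra h
      have he1 : e (negt s0) = ζ ^ ℓ := mul_right_cancel₀ h (huW (negt s0))
      rw [hEneg s0 hs0] at he1
      exact hneq he1
    have hr0ne : ∀ r0 : Fin k → Bool, e r0 = ζ ^ ℓ → r0 ≠ negt r0 := by
      intro r0 hr0 h
      apply hneq
      rw [← hEneg r0 hr0, ← h, hr0]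
    -- key step: Pi.single r0 (u s0) ∈ U for any r0 in the support class
    have hkey : ∀ r0 : Fin k → Bool, e r0 = ζ ^ ℓ → Pi.single r0 (u s0) ∈ U := by
      intro r0 hr0
      set X : Matrix (Fin k → Bool) (Fin k → Bool) ℂ :=
        Matrix.of fun r s => (if r = r0 ∧ s = s0 then (1 : ℂ) else 0) +
          (if r = negt r0 ∧ s = negt s0 then 1 else 0) with hX
      have hXD : X * Dmat k ζ = Dmat k ζ * X := by
        ext r s
        rw [Dmat, Matrix.mul_diagonal, Matrix.diagonal_mul]
        have hes : e r = e s ∨ X r s = 0 := by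
          by_cases h1 : r = r0 ∧ s = s0
          · left; obtain ⟨rfl, rfl⟩ := h1; rw [hr0, hs0]
          · by_cases h2 : r = negt r0 ∧ s = negt s0
            · left; obtain ⟨rfl, rfl⟩ := h2; rw [hEneg _ hr0, hEneg _ hs0]
            · right; simp [hX, h1, h2]
        rcases hes with h | h
        · show X r s * e s = e r * X r s
          rw [h]; ring
        · show X r s * e s = e r * X r s
          rw [h]; ring
      have hXP : X * Pmat k = Pmat k * X := by
        ext r s
        rw [mul_Pmat_apply, Pmat_mul_apply]
        simp only [hX, of_apply, negt_eq_iff, negt_negt]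
        exact add_comm _ _
      have hmv : X.mulVec u = (Pi.single r0 (u s0) : (Fin k → Bool) → ℂ) := by
        funext r
        rw [Matrix.mulVec, dotProduct]
        simp only [hX, of_apply, add_mul, Finset.sum_add_distrib, ite_mul, one_mul,
          zero_mul]
        have hne01 := hr0ne r0 hr0
        by_cases h1 : r = r0 <;> by_cases h2 : r = negt r0 <;>
          simp_all [Finset.sum_ite_eq', Pi.single_apply, eq_comm]
      have := hUinv X hXD hXP u huU
      rwa [hmv] at this
    -- conclude U = W
    apply le_antisymm hUW
    intro v hvW
    rw [hmemW] at hvW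
    have hv : v = ∑ r : Fin k → Bool, (Pi.single r (v r) : (Fin k → Bool) → ℂ) := by
      funext x
      rw [Finset.sum_apply]
      simp [Pi.single_apply]
    rw [hv]
    apply Submodule.sum_mem
    intro r _
    by_cases hvr : v r = 0
    · rw [hvr]; simp
    · have hr : e r = ζ ^ ℓ := mul_right_cancel₀ hvr (hvW r)
      have h1 := hkey r hr
      have h2 := U.smul_mem (v r * (u s0)⁻¹) h1
      have heq : (v r * (u s0)⁻¹) • (Pi.single r (u s0) : (Fin k → Bool) → ℂ) =
          (Pi.single r (v r) : (Fin k → Bool) → ℂ) := by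
        funext x
        simp only [Pi.smul_apply, Pi.single_apply, smul_eq_mul, mul_ite, mul_zero]
        congr 1
        field_simp
      rwa [heq] at h2
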